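/- If G is a cycle of cliques C_1, C_2, …, C_k with k ≥ 3, then |V(G)| − k ≤ Z_+(G) ≤ Z(G) ≤ |V(G)| − k + 2. -/
import Mathlib


/-! Basic definitions for zero forcing and positive (semidefinite) zero forcing. -/

variable {V : Type*}

/-- The standard zero forcing colour change rule: a black vertex `u` (i.e. `u ∈ S`)
forces its unique white neighbour `w`. -/
def ZFForce (G : SimpleGraph V) (S : Set V) (u w : V) : Prop :=
  u ∈ S ∧ w ∉ S ∧ G.Adj u w ∧ ∀ x, G.Adj u x → x ∉ S → x = w

/-- `x` and `y` are joined by a path of `G` all of whose vertices avoid `S`,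
i.e. they lie in the same connected component of `G − S`. -/
def ConnOutside (G : SimpleGraph V) (S : Set V) : V → V → Prop :=
  Relation.ReflTransGen fun x y => x ∉ S ∧ y ∉ S ∧ G.Adj x y

/-- The positive (semidefinite) colour change rule: a black vertex `u` forces a white
neighbour `w` provided `w` is the only white neighbour of `u` lying in the connected
component of `G − S` containing `w`. -/
def PSDForce (G : SimpleGraph V) (S : Set V) (u w : V) : Prop :=
  u ∈ S ∧ w ∉ S ∧ G.Adj u w ∧
    ∀ x, G.Adj u x → x ∉ S → ConnOutside G S x w → x = w

/-- A list of forces, applied in order starting with black set `S`, is a valid sequence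
of applications of the standard colour change rule. -/
def ZFValid (G : SimpleGraph V) : Set V → List (V × V) → Prop
  | _, [] => True
  | S, p :: L => ZFForce G S p.1 p.2 ∧ ZFValid G (insert p.2 S) L

/-- A list of forces, applied in order starting with black set `S`, is a valid sequence
of applications of the positive colour change rule. -/
def PSDValid (G : SimpleGraph V) : Set V → List (V × V) → Prop
  | _, [] => True
  | S, p :: L => PSDForce G S p.1 p.2 ∧ PSDValid G (insert p.2 S) L

/-- The black set resulting from performing the given list of forces. -/
def applyForces (S : Set V) (L : List (V × V)) : Set V :=
  L.foldl (fun T p => insert p.2 T) S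

/-- `B` is a zero forcing set: repeatedly applying the colour change rule starting from
`B` colours every vertex black. -/
def IsZeroForcingSet (G : SimpleGraph V) (B : Set V) : Prop :=
  ∃ L : List (V × V), ZFValid G B L ∧ applyForces B L = Set.univ

/-- `B` is a positive zero forcing set. -/
def IsPSDForcingSet (G : SimpleGraph V) (B : Set V) : Prop :=
  ∃ L : List (V × V), PSDValid G B L ∧ applyForces B L = Set.univ

/-- The zero forcing number `Z(G)`. -/
noncomputable def zfNum (G : SimpleGraph V) : ℕ :=
  sInf {n | ∃ B : Set V, B.ncard = n ∧ IsZeroForcingSet G B}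

/-- The positive (semidefinite) zero forcing number `Z₊(G)`. -/
noncomputable def psdNum (G : SimpleGraph V) : ℕ :=
  sInf {n | ∃ B : Set V, B.ncard = n ∧ IsPSDForcingSet G B}

/-- A clique cover of `G`: a finite family of cliques covering every edge of `G`. -/
def IsCliqueCover (G : SimpleGraph V) (𝒞 : Finset (Set V)) : Prop :=
  (∀ C ∈ 𝒞, G.IsClique C) ∧ ∀ u v, G.Adj u v → ∃ C ∈ 𝒞, u ∈ C ∧ v ∈ C

/-- The clique cover number `cc(G)`. -/
noncomputable def ccNum (G : SimpleGraph V) : ℕ :=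
  sInf {n | ∃ 𝒞 : Finset (Set V), 𝒞.card = n ∧ IsCliqueCover G 𝒞}

/-- A tree cover of `G`: a family of vertex-disjoint induced subtrees whose vertex sets
partition `V(G)`. -/
def IsTreeCover (G : SimpleGraph V) (𝒯 : Finset (Set V)) : Prop :=
  (∀ S ∈ 𝒯, (G.induce S).IsTree) ∧
    (∀ S ∈ 𝒯, ∀ T ∈ 𝒯, S ≠ T → Disjoint S T) ∧
    ∀ v : V, ∃ S ∈ 𝒯, v ∈ S

/-- The tree cover number `T(G)`. -/
noncomputable def tcNum (G : SimpleGraph V) : ℕ :=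
  sInf {n | ∃ 𝒯 : Finset (Set V), 𝒯.card = n ∧ IsTreeCover G 𝒯}

/-- A graph is chordal if it contains no induced cycle on four or more vertices. -/
def IsChordal (G : SimpleGraph V) : Prop :=
  ∀ n, 4 ≤ n → IsEmpty (SimpleGraph.cycleGraph n ↪g G)

/-- `C` is a maximal clique of `G`. -/
def IsMaxClique (G : SimpleGraph V) (C : Set V) : Prop :=
  G.IsClique C ∧ ∀ D : Set V, G.IsClique D → C ⊆ D → C = D

/-- A chordal graph is non-trivial if it has at least two distinct maximal cliques. -/
def NonTrivialChordal (G : SimpleGraph V) : Prop :=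
  IsChordal G ∧ ∃ C₁ C₂ : Set V, IsMaxClique G C₁ ∧ IsMaxClique G C₂ ∧ C₁ ≠ C₂

/-- A vertex is simplicial if its neighbourhood induces a clique. -/
def IsSimplicial (G : SimpleGraph V) (v : V) : Prop :=
  G.IsClique (G.neighborSet v)

/-- `G` is a cycle of cliques `C 1, C 2, …, C k` (indexed cyclically by `ZMod k`):
the `C i` are distinct maximal cliques covering all edges of `G`, and two distinct
cliques intersect exactly when they are cyclically consecutive. -/
def IsCycleOfCliques (G : SimpleGraph V) (k : ℕ) (C : ZMod k → Set V) : Prop :=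
  Function.Injective C ∧
    (∀ i, IsMaxClique G (C i)) ∧
    (∀ u v, G.Adj u v → ∃ i, u ∈ C i ∧ v ∈ C i) ∧
    ∀ i j : ZMod k, i ≠ j → ((C i ∩ C j).Nonempty ↔ (j = i + 1 ∨ i = j + 1))

section ZFAux

variable {V : Type*}

lemma applyForces_cons (S : Set V) (p : V × V) (L : List (V × V)) :
    applyForces S (p :: L) = applyForces (insert p.2 S) L := rfl

lemma subset_applyForces (S : Set V) (L : List (V × V)) : S ⊆ applyForces S L := by
  induction L generalizing S with
  | nil => exact subset_rfl
  | cons p l ih => exact (Set.subset_insert _ _).trans (ih _)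

lemma ncard_applyForces_le (S : Set V) (L : List (V × V)) :
    (applyForces S L).ncard ≤ S.ncard + L.length := by
  induction L generalizing S with
  | nil => simp [applyForces]
  | cons p l ih =>
    rw [applyForces_cons]
    calc (applyForces (insert p.2 S) l).ncard ≤ (insert p.2 S).ncard + l.length := ih _
      _ ≤ S.ncard + 1 + l.length := by
          exact Nat.add_le_add_right (Set.ncard_insert_le _ _) _
      _ = S.ncard + (p :: l).length := by simp [List.length_cons]; ring

lemma zfforce_psdforce {G : SimpleGraph V} {S : Set V} {u w : V}
    (h : ZFForce G S u w) : PSDForce G S u w :=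
  ⟨h.1, h.2.1, h.2.2.1, fun x hx hxs _ => h.2.2.2 x hx hxs⟩

lemma zfvalid_psdvalid {G : SimpleGraph V} {S : Set V} {L : List (V × V)}
    (h : ZFValid G S L) : PSDValid G S L := by
  induction L generalizing S with
  | nil => trivial
  | cons p l ih => exact ⟨zfforce_psdforce h.1, ih h.2⟩

lemma psdvalid_mem_props {G : SimpleGraph V} {S : Set V} {L : List (V × V)}
    (h : PSDValid G S L) {q : V × V} (hq : q ∈ L) : G.Adj q.1 q.2 ∧ q.2 ∉ S := by
  induction L generalizing S with
  | nil => simp at hq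
  | cons p l ih =>
    rcases List.mem_cons.1 hq with rfl | hq'
    · exact ⟨h.1.2.2.1, h.1.2.1⟩
    · have := ih h.2 hq'
      exact ⟨this.1, fun hs => this.2 (Set.mem_insert_iff.2 (Or.inr hs))⟩

open Classical in
/-- Assign to each potential force an index of a clique containing both endpoints. -/
noncomputable def cliqueIdx {k : ℕ} (G : SimpleGraph V) (C : ZMod k → Set V)
    [NeZero k] (p : V × V) : ZMod k :=
  if h : ∃ i, p.1 ∈ C i ∧ p.2 ∈ C i then h.choose else 0

lemma psdvalid_map_nodup {k : ℕ} [NeZero k] {G : SimpleGraph V} (C : ZMod k → Set V)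
    (hcl : ∀ i, G.IsClique (C i))
    (hcov : ∀ u v, G.Adj u v → ∃ i, u ∈ C i ∧ v ∈ C i)
    {S : Set V} {L : List (V × V)} (h : PSDValid G S L) :
    (L.map (cliqueIdx G C)).Nodup := by
  induction L generalizing S with
  | nil => simp
  | cons p l ih =>
    rw [List.map_cons, List.nodup_cons]
    refine ⟨?_, ih h.2⟩
    rintro hmem
    rcases List.mem_map.1 hmem with ⟨q, hq, heq⟩
    -- p's data
    obtain ⟨hp1, hp2, hpadj, huniq⟩ := h.1
    have hpex : ∃ i, p.1 ∈ C i ∧ p.2 ∈ C i := hcov _ _ hpadj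
    -- q's data
    obtain ⟨hqadj, hqnot⟩ := psdvalid_mem_props h.2 hq
    have hqex : ∃ i, q.1 ∈ C i ∧ q.2 ∈ C i := hcov _ _ hqadj
    rw [cliqueIdx, dif_pos hqex, cliqueIdx, dif_pos hpex] at heq
    have hq2ne : q.2 ≠ p.2 := fun hh => hqnot (hh ▸ Set.mem_insert _ _)
    have hq2S : q.2 ∉ S := fun hh => hqnot (Set.mem_insert_iff.2 (Or.inr hh))
    have hq2C : q.2 ∈ C hpex.choose := heq ▸ hqex.choose_spec.2
    have hadj1 : G.Adj p.1 q.2 :=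
      hcl _ hpex.choose_spec.1 hq2C (fun hh => hq2S (hh ▸ hp1))
    have hadj2 : G.Adj q.2 p.2 := hcl _ hq2C hpex.choose_spec.2 hq2ne
    exact hq2ne (huniq q.2 hadj1 hq2S
      (Relation.ReflTransGen.single ⟨hq2S, hp2, hadj2⟩))

lemma psd_lower_bound {k : ℕ} [Fintype V] (hk1 : 1 ≤ k) {G : SimpleGraph V}
    (C : ZMod k → Set V)
    (hcl : ∀ i, G.IsClique (C i))
    (hcov : ∀ u v, G.Adj u v → ∃ i, u ∈ C i ∧ v ∈ C i) :
    Fintype.card V - k ≤ psdNum G := by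
  have : NeZero k := ⟨by omega⟩
  have hne : {n | ∃ B : Set V, B.ncard = n ∧ IsPSDForcingSet G B}.Nonempty := by
    refine ⟨(Set.univ : Set V).ncard, Set.univ, rfl, [], trivial, rfl⟩
  refine le_csInf hne ?_
  rintro n ⟨B, rfl, L, hval, happ⟩
  have hlen : L.length ≤ k := by
    have hnodup := psdvalid_map_nodup C hcl hcov hval
    have := hnodup.length_le_card
    rwa [List.length_map, ZMod.card] at this
  have hcard : Fintype.card V ≤ B.ncard + L.length := by
    have := ncard_applyForces_le B L
    rw [happ, Set.ncard_univ, Nat.card_eq_fintype_card] at this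
    exact this
  omega

lemma psd_le_zf [Fintype V] (G : SimpleGraph V) : psdNum G ≤ zfNum G := by
  have hne : {n | ∃ B : Set V, B.ncard = n ∧ IsZeroForcingSet G B}.Nonempty :=
    ⟨(Set.univ : Set V).ncard, Set.univ, rfl, [], trivial, rfl⟩
  refine csInf_le_csInf (OrderBot.bddBelow _) hne ?_
  rintro n ⟨B, rfl, L, hval, happ⟩
  exact ⟨B, rfl, L, zfvalid_psdvalid hval, happ⟩

end ZFAux
section Upper

variable {V : Type*} {k : ℕ} {G : SimpleGraph V} {C : ZMod k → Set V}

/-- The chain of forces `(f (j-1), f j), (f j, f (j+1)), …` of length `n`. -/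
def chainList {α : Type*} (f : ℕ → α) : ℕ → ℕ → List (α × α)
  | _, 0 => []
  | j, Nat.succ n => (f (j-1), f j) :: chainList f (j+1) n

lemma zmod_cast_inj {a b : ℕ} (ha : a < k) (hb : b < k)
    (h : (a : ZMod k) = (b : ZMod k)) : a = b := by
  have h1 := ZMod.val_cast_of_lt ha
  have h2 := ZMod.val_cast_of_lt hb
  rw [h, h2] at h1
  omega

lemma zf_upper [Fintype V] (hk : 4 ≤ k) (hC : IsCycleOfCliques G k C) :
    zfNum G ≤ Fintype.card V - (k - 2) := by
  obtain ⟨hinj, hmax, hcov, hiff⟩ := hC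
  -- basic nonvanishing of small numerals in `ZMod k`
  have hnz : ∀ a : ℕ, 0 < a → a < k → ((a : ℕ) : ZMod k) ≠ 0 := by
    intro a ha hak h
    rw [ZMod.natCast_eq_zero_iff] at h
    have := Nat.le_of_dvd ha h
    omega
  have castk : ∀ a b : ℕ, a < k → b ≤ k → (a : ZMod k) = (b : ZMod k) →
      a = b ∨ (a = 0 ∧ b = k) := by
    intro a b ha hb h
    rcases eq_or_lt_of_le hb with hbk | hb'
    · right
      refine ⟨?_, hbk⟩
      rw [hbk, ZMod.natCast_self] at h
      have h0 : ((a : ℕ) : ZMod k) = ((0 : ℕ) : ZMod k) := by simpa using h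
      exact zmod_cast_inj ha (by omega) h0
    · left; exact zmod_cast_inj ha hb' h
  -- pairwise membership restriction
  have hmem2 : ∀ {u : V} {i j : ZMod k}, u ∈ C i → u ∈ C j →
      i = j ∨ j = i + 1 ∨ i = j + 1 := by
    intro u i j hi hj
    by_cases h : i = j
    · exact Or.inl h
    · exact Or.inr ((hiff i j h).1 ⟨u, hi, hj⟩)
  -- choose a vertex in each consecutive intersection
  have hcons : ∀ i : ZMod k, ∃ x, x ∈ C i ∧ x ∈ C (i + 1) := by
    intro i
    have hne : i ≠ i + 1 := by
      intro h
      have : (1 : ZMod k) = 0 := by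
        have := (left_eq_add).1 h
        exact this
      have h1 : ((1 : ℕ) : ZMod k) = 0 := by simpa using this
      exact hnz 1 (by omega) (by omega) h1
    obtain ⟨x, hx⟩ := (hiff i (i + 1) hne).2 (Or.inl rfl)
    exact ⟨x, hx.1, hx.2⟩
  choose w hw1 hw2 using hcons
  -- the only cliques containing `w i` are `C i` and `C (i+1)`
  have hwC : ∀ i t : ZMod k, w i ∈ C t → t = i ∨ t = i + 1 := by
    intro i t ht
    have hzero : ∀ a : ℕ, 0 < a → a < k → ∀ x : ZMod k, x ≠ x + (a : ℕ) := by
      intro a ha hak x h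
      exact hnz a ha hak ((left_eq_add).1 h)
    rcases hmem2 (hw1 i) ht with h | h | h
    · exact Or.inl h.symm
    · exact Or.inr h
    · -- i = t + 1
      rcases hmem2 (hw2 i) ht with h' | h' | h'
      · -- i + 1 = t ; with i = t + 1 get t = t + 2
        exfalso
        have : t = t + ((2 : ℕ) : ZMod k) := by
          have : t = (t + 1) + 1 := by rw [← h, h']
          push_cast
          linear_combination this
        exact hzero 2 (by omega) (by omega) t this
      · -- t = i + 2 ; i = t + 1 ⇒ i = i + 3
        exfalso
        have : i = i + ((3 : ℕ) : ZMod k) := by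
          have : i = (i + 1 + 1) + 1 := by rw [← h', h]
          push_cast
          linear_combination this
        exact hzero 3 (by omega) (by omega) i this
      · -- i + 1 = t + 1 ⇒ i = t ; with i = t + 1 ⇒ t = t + 1
        exfalso
        have hit : i = t := by
          have := add_right_cancel h'
          exact this
        have : t = t + ((1 : ℕ) : ZMod k) := by
          push_cast
          exact hit.symm.trans h
        exact hzero 1 (by omega) (by omega) t this
  -- injectivity of w
  have hwinj : ∀ i j : ZMod k, w i = w j → i = j := by
    intro i j h
    have h1 : w i ∈ C j := h ▸ hw1 j
    have h2 : w i ∈ C (j + 1) := h ▸ hw2 j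
    rcases hwC i j h1 with h' | h'
    · exact h'.symm
    · rcases hwC i (j + 1) h2 with h'' | h''
      · -- j + 1 = i and j = i + 1 : j = j + 2
        exfalso
        have : j = j + ((2 : ℕ) : ZMod k) := by
          push_cast
          calc j = i + 1 := h'
            _ = (j + 1) + 1 := by rw [h'']
            _ = j + 2 := by ring
        have h0 := (left_eq_add).1 this
        exact hnz 2 (by omega) (by omega) h0
      · exact (add_right_cancel h'').symm
  -- natural-number indexed version
  set ww : ℕ → V := fun m => w ((m : ℕ) : ZMod k) with hww
  have hwwinj : ∀ a b : ℕ, a < k → b < k → ww a = ww b → a = b := by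
    intro a b ha hb h
    exact zmod_cast_inj ha hb (hwinj _ _ h)
  have hcastsucc : ∀ m : ℕ, 1 ≤ m → ((m - 1 : ℕ) : ZMod k) + 1 = ((m : ℕ) : ZMod k) := by
    intro m hm
    have : (m - 1) + 1 = m := by omega
    rw [← Nat.cast_add_one, this]
  have hwwC : ∀ (m : ℕ) (t : ZMod k), ww m ∈ C t →
      t = ((m : ℕ) : ZMod k) ∨ t = ((m : ℕ) : ZMod k) + 1 := fun m t ht => hwC _ t ht
  -- the key forcing step
  have step : ∀ j : ℕ, 2 ≤ j → j ≤ k - 1 →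
      ZFForce G (Set.univ \ (ww '' Set.Icc j (k - 1))) (ww (j - 1)) (ww j) := by
    intro j hj2 hjk
    refine ⟨⟨Set.mem_univ _, ?_⟩, ?_, ?_, ?_⟩
    · rintro ⟨m, hm, hmeq⟩
      rw [Set.mem_Icc] at hm
      have := hwwinj m (j - 1) (by omega) (by omega) hmeq
      omega
    · intro hmem
      exact hmem.2 ⟨j, Set.mem_Icc.2 ⟨le_refl j, hjk⟩, rfl⟩
    · have h1 : ww (j - 1) ∈ C ((j : ℕ) : ZMod k) := by
        have := hw2 (((j - 1 : ℕ) : ZMod k))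
        rwa [hcastsucc j (by omega)] at this
      have h2 : ww j ∈ C ((j : ℕ) : ZMod k) := hw1 _
      have hne : ww (j - 1) ≠ ww j := by
        intro h
        have := hwwinj (j - 1) j (by omega) (by omega) h
        omega
      exact (hmax _).1 h1 h2 hne
    · intro x hadj hx
      have hximg : x ∈ ww '' Set.Icc j (k - 1) := by
        by_contra h
        exact hx ⟨Set.mem_univ x, h⟩
      obtain ⟨m, hm, rfl⟩ := hximg
      rw [Set.mem_Icc] at hm
      obtain ⟨t, ht1, ht2⟩ := hcov _ _ hadj
      rcases hwwC (j - 1) t ht1 with he1 | he1 <;> rcases hwwC m t ht2 with he2 | he2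
      · -- (j-1) = m
        exfalso
        have := castk (j - 1) m (by omega) (by omega) (he1 ▸ he2)
        omega
      · -- (j-1) = m + 1
        exfalso
        have hcast : ((j - 1 : ℕ) : ZMod k) = ((m + 1 : ℕ) : ZMod k) := by
          rw [Nat.cast_add_one, ← he2, ← he1]
        have := castk (j - 1) (m + 1) (by omega) (by omega) hcast
        omega
      · -- j = m  (via (j-1)+1 = m)
        have hcast : ((j : ℕ) : ZMod k) = ((m : ℕ) : ZMod k) := by
          rw [← hcastsucc j (by omega), ← he1, he2]
        have := castk j m (by omega) (by omega) hcast
        have : j = m := by omega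
        rw [this]
      · -- j = m + 1
        exfalso
        have hcast : ((j : ℕ) : ZMod k) = ((m + 1 : ℕ) : ZMod k) := by
          rw [← hcastsucc j (by omega), ← he1, Nat.cast_add_one, ← he2]
        have := castk j (m + 1) (by omega) (by omega) hcast
        omega
  -- the chain of forces is valid and completes the colouring
  have chain : ∀ (n j : ℕ), 2 ≤ j → j + n = k →
      ZFValid G (Set.univ \ (ww '' Set.Icc j (k - 1))) (chainList ww j n) ∧
      applyForces (Set.univ \ (ww '' Set.Icc j (k - 1))) (chainList ww j n) = Set.univ := by
    intro n
    induction n with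
    | zero =>
      intro j hj2 hjk
      have hempty : Set.Icc j (k - 1) = ∅ := Set.Icc_eq_empty (by omega)
      rw [hempty]
      exact ⟨trivial, by simp [chainList, applyForces]⟩
    | succ n ih =>
      intro j hj2 hjk
      have hjk1 : j ≤ k - 1 := by omega
      have hkey : insert (ww j) (Set.univ \ ww '' Set.Icc j (k - 1)) =
          Set.univ \ ww '' Set.Icc (j + 1) (k - 1) := by
        have hIcc : Set.Icc j (k - 1) = insert j (Set.Icc (j + 1) (k - 1)) := by
          ext m
          simp only [Set.mem_Icc, Set.mem_insert_iff]
          omega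
        rw [hIcc, Set.image_insert_eq]
        ext x
        simp only [Set.mem_insert_iff, Set.mem_diff, Set.mem_univ, true_and, not_or]
        constructor
        · rintro (rfl | ⟨_, h2⟩)
          · rintro ⟨m, hm, hmeq⟩
            rw [Set.mem_Icc] at hm
            have := hwwinj m j (by omega) (by omega) hmeq
            omega
          · exact h2
        · intro hxnot
          by_cases hxe : x = ww j
          · exact Or.inl hxe
          · exact Or.inr ⟨hxe, hxnot⟩
      have ihs := ih (j + 1) (by omega) (by omega)
      constructor
      · refine ⟨step j hj2 hjk1, ?_⟩
        show ZFValid G (insert (ww j) (Set.univ \ ww '' Set.Icc j (k - 1)))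
          (chainList ww (j + 1) n)
        rw [hkey]
        exact ihs.1
      · show applyForces (insert (ww j) (Set.univ \ ww '' Set.Icc j (k - 1)))
          (chainList ww (j + 1) n) = Set.univ
        rw [hkey]
        exact ihs.2
  -- conclude
  have hmain := chain (k - 2) 2 (le_refl 2) (by omega)
  set B : Set V := Set.univ \ (ww '' Set.Icc 2 (k - 1)) with hB
  have hforce : IsZeroForcingSet G B := ⟨chainList ww 2 (k - 2), hmain.1, hmain.2⟩
  have himgcard : (ww '' Set.Icc 2 (k - 1)).ncard = k - 2 := by
    rw [Set.ncard_image_of_injOn]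
    · rw [← Finset.coe_Icc, Set.ncard_coe_finset, Nat.card_Icc]
      omega
    · intro a ha b hb hab
      rw [Set.mem_Icc] at ha hb
      exact hwwinj a b (by omega) (by omega) hab
  have hcardB : B.ncard = Fintype.card V - (k - 2) := by
    rw [hB, Set.ncard_diff (Set.subset_univ _), himgcard, Set.ncard_univ,
      Nat.card_eq_fintype_card]
  have hle : zfNum G ≤ B.ncard := Nat.sInf_le ⟨B, rfl, hforce⟩
  rw [hcardB] at hle
  exact hle

lemma zf_upper_three [Fintype V] {C : ZMod 3 → Set V} {G : SimpleGraph V}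
    (hC : IsCycleOfCliques G 3 C) : zfNum G ≤ Fintype.card V - 1 := by
  obtain ⟨hinj, hmax, hcov, hiff⟩ := hC
  have hne : ((C 0 ∩ C 1 : Set V)).Nonempty :=
    (hiff 0 1 (by decide)).2 (Or.inl (by decide))
  obtain ⟨w, hw0, hw1⟩ := hne
  have hu : ∃ u ∈ C 0, u ≠ w := by
    by_contra h
    push_neg at h
    have hsub : C 0 ⊆ C 1 := fun x hx => (h x hx) ▸ hw1
    have heq := (hmax 0).2 (C 1) (hmax 1).1 hsub
    exact (by decide : (0 : ZMod 3) ≠ 1) (hinj heq)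
  obtain ⟨u, hu0, hune⟩ := hu
  have hadj : G.Adj u w := (hmax 0).1 hu0 hw0 hune
  set B : Set V := Set.univ \ {w} with hB
  have hforce : IsZeroForcingSet G B := by
    refine ⟨[(u, w)], ⟨⟨⟨Set.mem_univ u, by simpa using hune⟩, fun h => h.2 rfl, hadj, ?_⟩,
      trivial⟩, ?_⟩
    · intro x _ hxB
      by_contra hxw
      exact hxB ⟨Set.mem_univ x, by simpa using hxw⟩
    · show insert w (Set.univ \ {w}) = Set.univ
      rw [Set.insert_diff_singleton]
      simp
  have hcardB : B.ncard = Fintype.card V - 1 := by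
    rw [hB, Set.ncard_diff (Set.subset_univ _), Set.ncard_singleton, Set.ncard_univ,
      Nat.card_eq_fintype_card]
  have hle : zfNum G ≤ B.ncard := Nat.sInf_le ⟨B, rfl, hforce⟩
  rw [hcardB] at hle
  exact hle

end Upper
/-- If `G` is a cycle of cliques `C 1, …, C k` with `k ≥ 3`, then
`|V(G)| − k ≤ Z₊(G) ≤ Z(G) ≤ |V(G)| − k + 2`. -/
theorem cycleOfCliques_bounds {V : Type*} [Fintype V] (G : SimpleGraph V)
    (k : ℕ) (hk : 3 ≤ k) (C : ZMod k → Set V) (hC : IsCycleOfCliques G k C) :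
    Fintype.card V - k ≤ psdNum G ∧ psdNum G ≤ zfNum G ∧
      zfNum G ≤ Fintype.card V - k + 2 := by
  refine ⟨psd_lower_bound (by omega) C (fun i => (hC.2.1 i).1) hC.2.2.1, psd_le_zf G, ?_⟩
  rcases Nat.lt_or_ge k 4 with h4 | h4
  · have hk3 : k = 3 := by omega
    subst hk3
    have := zf_upper_three hC
    omega
  · have := zf_upper h4 hC
    omega
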